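/- arXiv:1211.6802 — 5 statements merged into one kernel-verified Lean document; each statement's English description precedes it below -/
import Mathlib

section
/- For r ≥ 0 and n ≥ 0, the negative-order Frobenius-Euler polynomial satisfies H_n^{(-r)}(x|λ) = (1/(1-λ)^r) ∑_{j=0}^{r} C(r,j)(-λ)^{r-j}(x+j)^n. -/
open Finset PowerSeries

/-! Writing `e^{xt}` as `rescale x (exp)`, the binomial theorem and `eʲᵗ e^{xt} = e^{(x+j)t}` give
`(eᵗ - λ)ʳ e^{xt} = ∑ⱼ C(r,j) (-λ)^{r-j} e^{(x+j)t}`; compare coefficients of `tⁿ` and divide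
by `(1 - λ)ʳ ≠ 0`. -/

theorem mk_pow_mul_inv_factorial_eq_rescale_exp {K : Type*} [Field K] [CharZero K] (x : K) :
    (PowerSeries.mk fun n => x ^ n * ((n.factorial : K))⁻¹) = rescale x (exp K) := by
  ext n
  simp [coeff_rescale, coeff_exp]

theorem exp_pow_mul_rescale_exp {A : Type*} [CommRing A] [Algebra ℚ A] (j : ℕ) (x : A) :
    exp A ^ j * rescale x (exp A) = rescale (x + j) (exp A) := by
  rw [exp_pow_eq_rescale_exp, exp_mul_exp_eq_exp_add, add_comm]

theorem exp_sub_C_pow_mul_rescale_exp {A : Type*} [CommRing A] [Algebra ℚ A]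
    (lam x : A) (r : ℕ) :
    (exp A - C lam) ^ r * rescale x (exp A) =
      ∑ j ∈ range (r + 1), C ((r.choose j : A) * (-lam) ^ (r - j)) * rescale (x + j) (exp A) := by
  rw [sub_eq_add_neg, add_pow, sum_mul]
  refine sum_congr rfl fun j _ => ?_
  rw [← exp_pow_mul_rescale_exp, map_mul, map_pow, map_neg, map_natCast]
  ring

theorem coeff_exp_sub_C_pow_mul_rescale_exp {K : Type*} [Field K] [CharZero K]
    (lam x : K) (r n : ℕ) :
    coeff n ((exp K - C lam) ^ r * rescale x (exp K)) =
      (∑ j ∈ range (r + 1), (r.choose j : K) * (-lam) ^ (r - j) * (x + j) ^ n) *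
        ((n.factorial : K))⁻¹ := by
  rw [exp_sub_C_pow_mul_rescale_exp, map_sum, sum_mul]
  refine sum_congr rfl fun j _ => ?_
  rw [← mk_pow_mul_inv_factorial_eq_rescale_exp, coeff_C_mul, coeff_mk]
  ring

/-- Negative-order Frobenius-Euler polynomials `Hneg r n x = Hₙ⁽⁻ʳ⁾(x|λ)`, defined by
`((e^t-λ)/(1-λ))^r e^{xt} = ∑ Hₙ⁽⁻ʳ⁾(x|λ) tⁿ/n!`, satisfy
`Hₙ⁽⁻ʳ⁾(x|λ) = (1/(1-λ)ʳ) ∑_{j=0}^{r} C(r,j)(-λ)^{r-j}(x+j)ⁿ`. -/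
theorem frobenius_euler_neg_order (lam : ℂ) (hlam : lam ≠ 1)
    (Hneg : ℕ → ℕ → ℂ → ℂ)
    (hH : ∀ (r : ℕ) (x : ℂ),
      PowerSeries.C (R := ℂ) ((1 - lam) ^ r) *
          (PowerSeries.mk fun n => Hneg r n x * ((n.factorial : ℂ))⁻¹) =
        (PowerSeries.exp ℂ - PowerSeries.C (R := ℂ) lam) ^ r *
          PowerSeries.mk fun n => x ^ n * ((n.factorial : ℂ))⁻¹)
    (r n : ℕ) (x : ℂ) :
    Hneg r n x = ((1 - lam) ^ r)⁻¹ *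
      ∑ j ∈ range (r + 1), (r.choose j : ℂ) * (-lam) ^ (r - j) * (x + j) ^ n := by
  have hcoeff := congrArg (coeff n) (hH r x)
  rw [mk_pow_mul_inv_factorial_eq_rescale_exp, coeff_exp_sub_C_pow_mul_rescale_exp,
    coeff_C_mul, coeff_mk, ← mul_assoc] at hcoeff
  have hpow : (1 - lam) ^ r ≠ 0 := pow_ne_zero _ (sub_ne_zero.mpr hlam.symm)
  rw [mul_right_cancel₀ (inv_ne_zero (Nat.cast_ne_zero.mpr n.factorial_ne_zero)) hcoeff.symm,
    inv_mul_cancel_left₀ hpow]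
end

section
/- Let p(x) be a polynomial of degree at most n with coefficients in ℚ(λ). Then p(x) = ∑_{k=0}^{n} C_k H_k^{(r)}(x|λ), where C_k = (1/(k!(1-λ)^r)) ∑_{j=0}^{r} C(r,j)(-λ)^{r-j} (D^k p)(j), and D denotes differentiation d/dx. -/
/-!
The coefficient of `tˡ/l!` in `(eᵗ - λ)ʳ` is `L(Xˡ)`, where `L q = ∑ⱼ C(r,j)(-λ)ʳ⁻ʲ q(j)`.
Hence comparing coefficients of `tᵐ` in `(∑ H_k tᵏ/k!) (eᵗ - λ)ʳ = (1 - λ)ʳ eˣᵗ` gives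
`x^m = ∑_k C(m,k) H_k(x) L(X^(m-k)) / (1 - λ)ʳ`, and `C(m,k) L(X^(m-k)) = L(Dᵏ Xᵐ) / k!`.
This is the expansion for `p = Xᵐ`; both sides are linear in `p`.
-/

open Finset PowerSeries

open scoped Nat Polynomial

theorem Polynomial.linearMap_apply_eq_of_natDegree_le {R M : Type*} [Semiring R]
    [AddCommMonoid M] [Module R M] {f g : R[X] →ₗ[R] M} {n : ℕ}
    (hfg : ∀ m ≤ n, f (X ^ m) = g (X ^ m)) {p : R[X]} (hp : p.natDegree ≤ n) : f p = g p := by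
  rw [p.as_sum_range_C_mul_X_pow' (Nat.lt_succ_of_le hp)]
  simp only [map_sum, ← smul_eq_C_mul, map_smul]
  exact sum_congr rfl fun m hm => by rw [hfg m (Nat.lt_succ_iff.1 (mem_range.1 hm))]

namespace FrobeniusEuler

section CommRing

variable {R : Type*} [CommRing R]

/-- `q ↦ ((E - λ)ʳ q)(0)`, where `E q = q(· + 1)` is the shift operator. -/
noncomputable def shiftPowEval (lam : R) (r : ℕ) : R[X] →ₗ[R] R :=
  ∑ j ∈ range (r + 1), ((r.choose j : R) * (-lam) ^ (r - j)) • Polynomial.leval (j : R)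

theorem shiftPowEval_apply (lam : R) (r : ℕ) (q : R[X]) :
    shiftPowEval lam r q =
      ∑ j ∈ range (r + 1), (r.choose j : R) * (-lam) ^ (r - j) * q.eval (j : R) := by
  simp [shiftPowEval, LinearMap.sum_apply]

theorem coeff_exp_sub_C_pow [Algebra ℚ R] (lam : R) (r l : ℕ) :
    coeff l ((exp R - C lam) ^ r) =
      shiftPowEval lam r (Polynomial.X ^ l) * algebraMap ℚ R (1 / l !) := by
  rw [shiftPowEval_apply, sum_mul, sub_eq_add_neg, ← map_neg, add_pow, map_sum]
  refine sum_congr rfl fun j _ => ?_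
  rw [← map_pow, exp_pow_eq_rescale_exp, ← map_natCast (C (R := R)), coeff_mul_C, coeff_mul_C,
    coeff_rescale, coeff_exp]
  simp only [Polynomial.eval_pow, Polynomial.eval_X]
  ring

end CommRing

section Field

variable {K : Type*} [Field K]

/-- `h n = H_n⁽ʳ⁾(x|λ)` for every `n`. -/
def IsFrobeniusEulerSeq [CharZero K] (lam : K) (r : ℕ) (x : K) (h : ℕ → K) : Prop :=
  (mk fun n => h n * (n ! : K)⁻¹) * (exp K - C lam) ^ r =
    C ((1 - lam) ^ r) * mk fun n => x ^ n * (n ! : K)⁻¹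

/-- The coefficient `C_k` of `p` in the Frobenius–Euler basis. -/
noncomputable def expansionCoeff (lam : K) (r k : ℕ) : K[X] →ₗ[K] K :=
  ((k ! : K) * (1 - lam) ^ r)⁻¹ • (shiftPowEval lam r ∘ₗ Polynomial.derivative ^ k)

theorem expansionCoeff_apply (lam : K) (r k : ℕ) (p : K[X]) :
    expansionCoeff lam r k p = ((k ! : K) * (1 - lam) ^ r)⁻¹ *
      ∑ j ∈ range (r + 1),
        (r.choose j : K) * (-lam) ^ (r - j) * (Polynomial.derivative^[k] p).eval (j : K) := by
  simp [expansionCoeff, shiftPowEval_apply, Module.End.pow_apply]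

theorem shiftPowEval_X_pow [CharZero K] (lam : K) (r l : ℕ) :
    shiftPowEval lam r (Polynomial.X ^ l) = l ! * coeff l ((exp K - C lam) ^ r) := by
  rw [coeff_exp_sub_C_pow, one_div, map_inv₀, map_natCast]
  field_simp [(Nat.cast_ne_zero (R := K)).2 l.factorial_ne_zero]

theorem expansionCoeff_X_pow [CharZero K] (lam : K) (r : ℕ) {k m : ℕ} (hkm : k ≤ m) :
    expansionCoeff lam r k (Polynomial.X ^ m) =
      ((k ! : K) * (1 - lam) ^ r)⁻¹ * m ! * coeff (m - k) ((exp K - C lam) ^ r) := by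
  have hfact : ((m - k)! : K) * m.descFactorial k = m ! := by
    exact_mod_cast Nat.factorial_mul_descFactorial hkm
  rw [expansionCoeff, LinearMap.smul_apply, LinearMap.comp_apply, Module.End.pow_apply,
    Polynomial.iterate_derivative_X_pow_eq_smul, map_smul, shiftPowEval_X_pow, ← hfact,
    smul_eq_mul]
  ring

theorem expansionCoeff_X_pow_of_lt (lam : K) (r : ℕ) {k m : ℕ} (hmk : m < k) :
    expansionCoeff lam r k (Polynomial.X ^ m) = 0 := by
  rw [expansionCoeff, LinearMap.smul_apply, LinearMap.comp_apply, Module.End.pow_apply,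
    Polynomial.iterate_derivative_eq_zero (by simpa using hmk), map_zero, smul_zero]

theorem IsFrobeniusEulerSeq.sum_mul_coeff [CharZero K] {lam x : K} {r : ℕ} {h : ℕ → K}
    (hh : IsFrobeniusEulerSeq lam r x h) (m : ℕ) :
    ∑ k ∈ range (m + 1), h k * (k ! : K)⁻¹ * coeff (m - k) ((exp K - C lam) ^ r) =
      (1 - lam) ^ r * (x ^ m * (m ! : K)⁻¹) := by
  have hm := congrArg (coeff m) hh
  rw [coeff_C_mul, coeff_mk, coeff_mul, Nat.sum_antidiagonal_eq_sum_range_succ_mk] at hm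
  simpa only [coeff_mk] using hm

theorem IsFrobeniusEulerSeq.sum_expansionCoeff_X_pow_mul [CharZero K] {lam x : K} {r : ℕ}
    {h : ℕ → K} (hh : IsFrobeniusEulerSeq lam r x h) (hlam : lam ≠ 1) {m n : ℕ} (hmn : m ≤ n) :
    ∑ k ∈ range (n + 1), expansionCoeff lam r k (Polynomial.X ^ m) * h k = x ^ m := by
  have hlam' : (1 - lam) ^ r ≠ 0 := pow_ne_zero _ (sub_ne_zero.2 hlam.symm)
  have hm : (m ! : K) ≠ 0 := Nat.cast_ne_zero.2 m.factorial_ne_zero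
  rw [← sum_subset (range_subset_range.2 (Nat.succ_le_succ hmn)) fun k _ hk => by
      rw [expansionCoeff_X_pow_of_lt _ _ (by simpa using hk), zero_mul]]
  calc ∑ k ∈ range (m + 1), expansionCoeff lam r k (Polynomial.X ^ m) * h k
      = ((1 - lam) ^ r)⁻¹ * m ! *
          ∑ k ∈ range (m + 1), h k * (k ! : K)⁻¹ * coeff (m - k) ((exp K - C lam) ^ r) := by
        rw [mul_sum]
        refine sum_congr rfl fun k hk => ?_
        rw [expansionCoeff_X_pow _ _ (Nat.lt_succ_iff.1 (mem_range.1 hk)), mul_inv]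
        ring
    _ = x ^ m := by
        rw [hh.sum_mul_coeff]
        field_simp

theorem IsFrobeniusEulerSeq.eval_eq_sum_expansionCoeff_mul [CharZero K] {lam x : K} {r : ℕ}
    {h : ℕ → K} (hh : IsFrobeniusEulerSeq lam r x h) (hlam : lam ≠ 1) {n : ℕ} {p : K[X]}
    (hp : p.natDegree ≤ n) :
    p.eval x = ∑ k ∈ range (n + 1), expansionCoeff lam r k p * h k := by
  have key := Polynomial.linearMap_apply_eq_of_natDegree_le (f := Polynomial.leval x)
    (g := ∑ k ∈ range (n + 1), h k • expansionCoeff lam r k) (fun m hm => ?_) hp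
  · simpa [LinearMap.sum_apply, mul_comm] using key
  · simpa [LinearMap.sum_apply, mul_comm] using (hh.sum_expansionCoeff_X_pow_mul hlam hm).symm

end Field

end FrobeniusEuler

/-- Expansion of a polynomial `p` of degree ≤ n in the basis of order-`r`
Frobenius-Euler polynomials:
`p(x) = ∑_{k=0}^{n} C_k H_k⁽ʳ⁾(x|λ)` with
`C_k = (1/(k!(1-λ)ʳ)) ∑_{j=0}^{r} C(r,j)(-λ)^{r-j} (Dᵏp)(j)`. -/
theorem frobenius_euler_basis_expansion (lam : ℂ) (hlam : lam ≠ 1) (r : ℕ)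
    (H : ℕ → ℕ → ℂ → ℂ)
    (hH : ∀ (r : ℕ) (x : ℂ),
      (PowerSeries.mk fun n => H r n x * ((n.factorial : ℂ))⁻¹) *
        (PowerSeries.exp ℂ - PowerSeries.C lam) ^ r =
      PowerSeries.C ((1 - lam) ^ r) *
        PowerSeries.mk fun n => x ^ n * ((n.factorial : ℂ))⁻¹)
    (n : ℕ) (p : Polynomial ℂ) (hp : p.natDegree ≤ n) (x : ℂ) :
    p.eval x = ∑ k ∈ range (n + 1),
      (((k.factorial : ℂ) * (1 - lam) ^ r)⁻¹ *
        ∑ j ∈ range (r + 1), (r.choose j : ℂ) * (-lam) ^ (r - j) *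
          (Polynomial.derivative^[k] p).eval (j : ℂ)) * H r k x := by
  have hseq : FrobeniusEuler.IsFrobeniusEulerSeq lam r x (H r · x) := hH r x
  simpa only [FrobeniusEuler.expansionCoeff_apply] using
    hseq.eval_eq_sum_expansionCoeff_mul hlam hp
end

section
/- For all n ≥ 0 and r ≥ 0: H_n^{(-r)}(0|λ) = (r!/(1-λ)^r) S_λ(n,r), where S_λ(n,r) = (1/r!) ∑_{j=0}^{r} C(r,j)(-λ)^{r-j} j^n. -/
open Finset PowerSeries

/-! At `x = 0` the factor `e^{xt}` is `1`, so `(1-λ)^r ∑ Hₙ⁽⁻ʳ⁾(0|λ) tⁿ/n! = (e^t - λ)^r`. Expanding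
the right side binomially and using `e^{jt} = ∑ jⁿ tⁿ/n!` gives its `n`-th coefficient. -/

namespace PowerSeries

variable {A : Type*} [CommRing A] [Algebra ℚ A]

theorem coeff_exp_sub_C_pow (a : A) (r n : ℕ) :
    coeff n ((exp A - C a) ^ r) =
      algebraMap ℚ A (1 / n.factorial) *
        ∑ j ∈ range (r + 1), (r.choose j : A) * (-a) ^ (r - j) * (j : A) ^ n := by
  rw [sub_eq_add_neg, ← map_neg, add_pow, map_sum, mul_sum]
  refine sum_congr rfl fun j _ => ?_
  rw [← map_pow, exp_pow_eq_rescale_exp, ← map_natCast (C (R := A)), mul_assoc, ← map_mul,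
    coeff_mul_C, coeff_rescale, coeff_exp]
  ring

theorem mk_zero_pow_mul_inv_factorial {K : Type*} [DivisionSemiring K] :
    (mk fun n => (0 : K) ^ n * (n.factorial : K)⁻¹) = 1 := by
  ext (_ | n) <;> simp

end PowerSeries

/-- `Hₙ⁽⁻ʳ⁾(0|λ) = (r!/(1-λ)ʳ) S_λ(n,r)` with
`S_λ(n,r) = (1/r!) ∑_{j=0}^{r} C(r,j)(-λ)^{r-j} jⁿ`. -/
theorem frobenius_euler_neg_order_stirling (lam : ℂ) (hlam : lam ≠ 1)
    (Hneg : ℕ → ℕ → ℂ → ℂ)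
    (hH : ∀ (r : ℕ) (x : ℂ),
      PowerSeries.C (R := ℂ) ((1 - lam) ^ r) *
          (PowerSeries.mk fun n => Hneg r n x * ((n.factorial : ℂ))⁻¹) =
        (PowerSeries.exp ℂ - PowerSeries.C (R := ℂ) lam) ^ r *
          PowerSeries.mk fun n => x ^ n * ((n.factorial : ℂ))⁻¹)
    (n r : ℕ) :
    Hneg r n 0 = ((r.factorial : ℂ) / (1 - lam) ^ r) *
      (((r.factorial : ℂ))⁻¹ *
        ∑ j ∈ range (r + 1), (r.choose j : ℂ) * (-lam) ^ (r - j) * (j : ℂ) ^ n) := by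
  have hcoeff := congrArg (coeff n) (hH r 0)
  rw [mk_zero_pow_mul_inv_factorial, mul_one, coeff_C_mul, coeff_mk, coeff_exp_sub_C_pow] at hcoeff
  have hn : (n.factorial : ℂ) ≠ 0 := Nat.cast_ne_zero.mpr n.factorial_ne_zero
  have hr : (r.factorial : ℂ) ≠ 0 := Nat.cast_ne_zero.mpr r.factorial_ne_zero
  have hlam' : (1 - lam) ^ r ≠ 0 := pow_ne_zero _ (sub_ne_zero.mpr hlam.symm)
  simp only [one_div, map_inv₀, map_natCast] at hcoeff
  field_simp at hcoeff ⊢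
  linear_combination hcoeff
end

section
/- For all r, s, n ≥ 0 with s ≤ r: H_n^{(r-s)}(x|λ) = ∑_{l=0}^{n} [ C(n,l) ∑_{m=0}^{min(s,l)} C(s,m)/(1-λ)^m · T(l,m) ] H_{n-l}^{(r)}(x|λ), where T(l,m) = ∑_{k_1+⋯+k_m=l, each k_j ≥ 1} (l choose k_1,…,k_m) is the number of surjections from an l-set to an m-set counted via multinomial coefficients (with T(0,0)=1, T(l,0)=0 for l≥1). -/
/-!
Comparing the defining identities for the orders `r - s` and `r` gives
`(1 - λ)^s G_{r-s} = (e^t - λ)^s G_r`, where `G_r` is the exponential generating function of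
`H^{(r)}_n(x|λ)`. Writing `e^t - λ = (e^t - 1) + (1 - λ)`, the binomial theorem turns
`((e^t - λ)/(1 - λ))^s` into `∑_m C(s,m) (1-λ)^{-m} (e^t - 1)^m`, and the `t^l` coefficient of
`(e^t - 1)^m` is `T(l,m)/l!` because every factor contributes `∑_{k ≥ 1} t^k/k!`. The
coefficient of `t^n` in a product of exponential generating functions is the binomial
convolution, which is the claimed formula.
-/

open Finset PowerSeries

/-- `T l m = ∑_{k₁+⋯+k_m = l, k_j ≥ 1} (l choose k₁,…,k_m)`, the number of
surjections from an `l`-set onto an `m`-set (`T 0 0 = 1`, `T l 0 = 0` for `l ≥ 1`). -/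
def surjCount (l m : ℕ) : ℕ :=
  ∑ k ∈ (Finset.Nat.antidiagonalTuple m l).filter (fun k => ∀ j, 1 ≤ k j),
    Nat.multinomial Finset.univ k

open scoped Nat

theorem surjCount_eq_zero_of_lt {l m : ℕ} (h : l < m) : surjCount l m = 0 := by
  refine sum_eq_zero fun k hk => absurd ?_ (Nat.not_le.mpr h)
  rw [mem_filter, Nat.mem_antidiagonalTuple] at hk
  calc m = ∑ _i : Fin m, 1 := by simp
    _ ≤ ∑ i, k i := sum_le_sum fun i _ => hk.2 i
    _ = l := hk.1

theorem PowerSeries.coeff_pow_eq_sum_antidiagonalTuple {R : Type*} [CommSemiring R]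
    (p : R⟦X⟧) (m l : ℕ) :
    coeff l (p ^ m) = ∑ k ∈ Nat.antidiagonalTuple m l, ∏ i, coeff (k i) p := by
  rw [← Fin.prod_const, coeff_prod, ← piAntidiag_univ_fin_eq_antidiagonalTuple, finsuppAntidiag,
    sum_map, ← sum_attach (piAntidiag _ _)]
  rfl

theorem Nat.cast_multinomial_mul_inv_factorial {K α : Type*} [Field K] [CharZero K]
    (s : Finset α) (f : α → ℕ) :
    (Nat.multinomial s f : K) * ((∑ i ∈ s, f i)! : K)⁻¹ = ∏ i ∈ s, ((f i)! : K)⁻¹ := by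
  rw [← Nat.multinomial_spec s f, prod_inv_distrib, Nat.cast_mul, Nat.cast_prod]
  have : (Nat.multinomial s f : K) ≠ 0 := by exact_mod_cast (Nat.multinomial_pos s f).ne'
  field_simp

theorem PowerSeries.add_C_pow_eq_C_pow_mul {K : Type*} [Field K] {c : K} (hc : c ≠ 0)
    (p : K⟦X⟧) (s : ℕ) :
    (p + C c) ^ s = C (c ^ s) * ∑ m ∈ range (s + 1), C (s.choose m / c ^ m) * p ^ m := by
  rw [add_pow, mul_sum]
  refine sum_congr rfl fun m hm => ?_
  have hcm : c ^ s / c ^ m = c ^ (s - m) := by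
    rw [div_eq_mul_inv, pow_sub₀ c hc (Nat.lt_succ_iff.mp (mem_range.mp hm))]
  rw [← map_pow, ← map_natCast (C (R := K)), ← mul_assoc, ← map_mul, mul_div_assoc',
    mul_comm (c ^ s), mul_div_assoc, hcm, map_mul]
  ring

theorem pow_mul_eq_pow_mul_of_mul_pow_eq_pow_mul {R : Type*} [CommRing R] [IsDomain R]
    {F : ℕ → R} {E c x : R} (hE : E ≠ 0) (hF : ∀ t, F t * E ^ t = c ^ t * x) (a s : ℕ) :
    c ^ s * F a = E ^ s * F (a + s) := by
  apply mul_right_cancel₀ (pow_ne_zero (a + s) hE)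
  calc c ^ s * F a * E ^ (a + s) = c ^ s * (F a * E ^ a) * E ^ s := by ring
    _ = F (a + s) * E ^ (a + s) * E ^ s := by rw [hF, hF]; ring
    _ = E ^ s * F (a + s) * E ^ (a + s) := by ring

section

variable {K : Type*} [Field K] [CharZero K]

theorem PowerSeries.coeff_exp_sub_one (k : ℕ) :
    coeff k (exp K - 1) = if k = 0 then 0 else ((k ! : K))⁻¹ := by
  rcases eq_or_ne k 0 with rfl | hk <;> simp [coeff_exp, *]

theorem PowerSeries.coeff_exp_sub_one_pow (m l : ℕ) :
    coeff l ((exp K - 1) ^ m) = surjCount l m * ((l ! : K))⁻¹ := by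
  rw [coeff_pow_eq_sum_antidiagonalTuple, surjCount, Nat.cast_sum, sum_mul,
    ← sum_filter_of_ne (p := fun k : Fin m → ℕ => ∀ j, 1 ≤ k j)]
  · refine sum_congr rfl fun k hk => ?_
    obtain ⟨hsum, hpos⟩ := mem_filter.mp hk
    rw [Nat.mem_antidiagonalTuple] at hsum
    rw [← hsum, Nat.cast_multinomial_mul_inv_factorial]
    exact prod_congr rfl fun i _ => by rw [coeff_exp_sub_one, if_neg (by have := hpos i; omega)]
  · intro k _ hk j
    by_contra! h
    exact hk (prod_eq_zero (mem_univ j) (by simp [coeff_exp_sub_one, Nat.lt_one_iff.mp h]))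

theorem PowerSeries.sum_C_mul_exp_sub_one_pow (a : ℕ → K) (s : ℕ) :
    ∑ m ∈ range (s + 1), C (a m) * (exp K - 1) ^ m =
      mk fun l => (∑ m ∈ range (min s l + 1), a m * surjCount l m) * (l ! : K)⁻¹ := by
  ext l
  have htrunc : ∑ m ∈ range (min s l + 1), a m * surjCount l m =
      ∑ m ∈ range (s + 1), a m * surjCount l m := by
    refine sum_subset (range_subset_range.mpr (by omega)) fun m hm hm' => ?_
    rw [mem_range] at hm hm'
    rw [surjCount_eq_zero_of_lt (by omega), Nat.cast_zero, mul_zero]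
  rw [coeff_mk, htrunc, map_sum, sum_mul]
  simp only [coeff_C_mul, coeff_exp_sub_one_pow, mul_assoc]

theorem PowerSeries.coeff_mk_mul_inv_factorial_mul_mk (f g : ℕ → K) (n : ℕ) :
    coeff n ((mk fun k => f k * (k ! : K)⁻¹) * mk fun k => g k * (k ! : K)⁻¹) =
      (∑ l ∈ range (n + 1), n.choose l * f l * g (n - l)) * (n ! : K)⁻¹ := by
  rw [coeff_mul, Nat.sum_antidiagonal_eq_sum_range_succ_mk, sum_mul]
  refine sum_congr rfl fun l hl => ?_
  have hn : (n ! : K) ≠ 0 := Nat.cast_ne_zero.mpr n.factorial_ne_zero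
  rw [coeff_mk, coeff_mk, Nat.cast_choose K (Nat.lt_succ_iff.mp (mem_range.mp hl))]
  field_simp

end

/-- For `s ≤ r`:
`Hₙ⁽ʳ⁻ˢ⁾(x|λ) = ∑_{l=0}^{n} [C(n,l) ∑_{m=0}^{min(s,l)} C(s,m)/(1-λ)ᵐ · T(l,m)] H_{n-l}⁽ʳ⁾(x|λ)`. -/
theorem frobenius_euler_order_reduction (lam : ℂ) (hlam : lam ≠ 1)
    (H : ℕ → ℕ → ℂ → ℂ)
    (hH : ∀ (r : ℕ) (x : ℂ),
      (PowerSeries.mk fun n => H r n x * ((n.factorial : ℂ))⁻¹) *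
        (PowerSeries.exp ℂ - PowerSeries.C (R := ℂ) lam) ^ r =
      PowerSeries.C (R := ℂ) ((1 - lam) ^ r) *
        PowerSeries.mk fun n => x ^ n * ((n.factorial : ℂ))⁻¹)
    (r s n : ℕ) (hs : s ≤ r) (x : ℂ) :
    H (r - s) n x = ∑ l ∈ range (n + 1),
      ((n.choose l : ℂ) * ∑ m ∈ range (min s l + 1),
        (s.choose m : ℂ) / (1 - lam) ^ m * (surjCount l m : ℂ)) * H r (n - l) x := by
  have hc : 1 - lam ≠ 0 := sub_ne_zero.mpr hlam.symm
  have hE : exp ℂ - C lam = (exp ℂ - 1) + C (1 - lam) := by rw [map_sub, map_one]; ring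
  have hE0 : exp ℂ - C lam ≠ 0 := fun h => hc <| by
    simpa [constantCoeff_exp] using congrArg constantCoeff h
  have key := pow_mul_eq_pow_mul_of_mul_pow_eq_pow_mul hE0 (c := C (1 - lam))
    (fun t => by rw [← map_pow]; exact hH t x) (r - s) s
  rw [Nat.sub_add_cancel hs, hE, add_C_pow_eq_C_pow_mul hc, ← map_pow, mul_assoc,
    sum_C_mul_exp_sub_one_pow (fun m => (s.choose m : ℂ) / (1 - lam) ^ m)] at key
  have hegf := congrArg (coeff n)
    (mul_left_cancel₀ ((map_ne_zero_iff C C_injective).mpr (pow_ne_zero s hc)) key)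
  rw [coeff_mk_mul_inv_factorial_mul_mk, coeff_mk] at hegf
  rw [mul_right_cancel₀ (inv_ne_zero (Nat.cast_ne_zero.mpr n.factorial_ne_zero)) hegf]
end

section
/- For all n ≥ 0 and r ≥ 0: (r!/(1-λ)^r) S_λ(n,r) = ∑_{l=0}^{n} [ C(n,l) ∑_{m=0}^{min(2r,l)} C(2r,m)/(1-λ)^m · m! S(l,m) ] H_{n-l}^{(r)}(λ), where S_λ(n,r) = (1/r!) ∑_{j=0}^{r} C(r,j)(-λ)^{r-j} j^n and S(l,m) are the ordinary Stirling numbers of the second kind. -/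
open Finset PowerSeries

/-- `m! S(l,m) = ∑_{k₁+⋯+k_m = l, k_j ≥ 1} (l choose k₁,…,k_m)`, i.e. `m!` times the
Stirling number of the second kind. -/
def mFactStirling (l m : ℕ) : ℕ :=
  ∑ k ∈ (Finset.Nat.antidiagonalTuple m l).filter (fun k => ∀ j, 1 ≤ k j),
    Nat.multinomial Finset.univ k

open Nat

/-!
Write `E = eᵗ - λ` and `u = 1 - λ`. The hypothesis says that the exponential generating
function of `H⁽ʳ⁾` times `Eʳ` is `uʳ`, hence `u⁻ʳ Eʳ = (E / u)^(2r) · ∑ H⁽ʳ⁾ₖ tᵏ/k!`.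
Expanding `Eʳ` binomially gives the egf of `∑ⱼ C(r,j)(-λ)^(r-j) jⁿ = r! S_λ(n,r)`, while
`E / u = 1 + (eᵗ - 1)/u` and `(eᵗ - 1)ᵐ` is the egf of `m! S(l,m)`, which vanishes for `m > l`.
Comparing the coefficients of `tⁿ/n!` (a binomial convolution) gives the identity.
-/

lemma mFactStirling_eq_zero_of_lt {l m : ℕ} (h : l < m) : mFactStirling l m = 0 := by
  refine sum_eq_zero fun k hk => absurd h (not_lt.mpr ?_)
  obtain ⟨hsum, hpos⟩ := mem_filter.mp hk
  calc m = ∑ _j : Fin m, 1 := by simp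
    _ ≤ ∑ j, k j := sum_le_sum fun j _ => hpos j
    _ = l := Nat.mem_antidiagonalTuple.mp hsum

lemma Finset.sum_finsuppAntidiag_eq_sum_piAntidiag {ι μ M : Type*} [DecidableEq ι]
    [AddCommMonoid μ] [HasAntidiagonal μ] [DecidableEq μ] [AddCommMonoid M]
    (s : Finset ι) (n : μ) (f : (ι → μ) → M) :
    ∑ g ∈ finsuppAntidiag s n, f g = ∑ g ∈ piAntidiag s n, f g := by
  rw [finsuppAntidiag, sum_map, ← sum_attach (piAntidiag s n)]
  rfl

namespace PowerSeries

variable {K : Type*} [Field K]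

def egf (a : ℕ → K) : K⟦X⟧ := mk fun n => a n * (n ! : K)⁻¹

@[simp]
lemma coeff_egf (a : ℕ → K) (n : ℕ) : coeff n (egf a) = a n * (n ! : K)⁻¹ := coeff_mk _ _

lemma egf_injective [CharZero K] : Function.Injective (egf (K := K)) :=
  fun a b h => funext fun n => mul_right_cancel₀ (inv_ne_zero (cast_ne_zero.mpr n.factorial_ne_zero)) <| by
    simpa using congrArg (coeff n) h

lemma C_mul_egf (c : K) (a : ℕ → K) : C c * egf a = egf fun n => c * a n := by
  ext n; simp [mul_assoc]

lemma egf_mul [CharZero K] (a b : ℕ → K) :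
    egf a * egf b = egf fun n => ∑ l ∈ range (n + 1), n.choose l * a l * b (n - l) := by
  ext n
  rw [coeff_mul, Nat.sum_antidiagonal_eq_sum_range_succ_mk, coeff_egf, sum_mul]
  refine sum_congr rfl fun l hl => ?_
  have hln : l ≤ n := Nat.lt_succ_iff.mp (mem_range.mp hl)
  have hn : (n ! : K) ≠ 0 := cast_ne_zero.mpr n.factorial_ne_zero
  simp only [coeff_egf, cast_choose K hln]
  field_simp

lemma exp_sub_C_pow [CharZero K] (c : K) (r : ℕ) :
    (exp K - C c) ^ r =
      egf fun n => ∑ j ∈ range (r + 1), (r.choose j : K) * (-c) ^ (r - j) * (j : K) ^ n := by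
  rw [sub_eq_add_neg, ← map_neg, add_pow]
  ext n
  simp only [map_sum, coeff_egf, sum_mul, exp_pow_eq_rescale_exp, ← map_pow,
    ← map_natCast (C (R := K)), coeff_mul_C, coeff_rescale]
  refine sum_congr rfl fun j _ => by simp only [coeff_exp, one_div, map_inv₀, map_natCast]; ring

lemma coeff_exp_sub_one_s18 [CharZero K] (k : ℕ) :
    coeff k (exp K - 1) = if k = 0 then 0 else (k ! : K)⁻¹ := by
  rcases eq_or_ne k 0 with rfl | hk
  · simp
  · simp [hk]

lemma exp_sub_one_pow [CharZero K] (m : ℕ) :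
    (exp K - 1) ^ m = egf fun l => (mFactStirling l m : K) := by
  ext l
  rw [← Fin.prod_const, coeff_prod,
    sum_finsuppAntidiag_eq_sum_piAntidiag (f := fun g => ∏ i, coeff (g i) (exp K - 1)),
    piAntidiag_univ_fin_eq_antidiagonalTuple, coeff_egf, mFactStirling, Nat.cast_sum, sum_filter,
    sum_mul]
  refine sum_congr rfl fun k hk => ?_
  split_ifs with hpos
  · have hsum : ∑ j, k j = l := Nat.mem_antidiagonalTuple.mp hk
    have hprod : (∏ j, ((k j)! : K)) ≠ 0 :=
      prod_ne_zero_iff.mpr fun j _ => cast_ne_zero.mpr (k j).factorial_ne_zero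
    have hM : (multinomial univ k : K) ≠ 0 := cast_ne_zero.mpr (multinomial_pos _ _).ne'
    have hspec := congrArg (Nat.cast (R := K)) (Nat.multinomial_spec univ k)
    rw [hsum] at hspec
    push_cast at hspec
    simp only [coeff_exp_sub_one_s18, Nat.one_le_iff_ne_zero.mp (hpos _), if_false, prod_inv_distrib]
    rw [← hspec]
    field_simp
  · obtain ⟨j, hj⟩ := not_forall.mp hpos
    rw [zero_mul]
    apply prod_eq_zero (mem_univ j)
    rw [Nat.lt_one_iff.mp (not_le.mp hj), coeff_exp_sub_one_s18, if_pos rfl]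

lemma one_add_C_inv_mul_exp_sub_one_pow [CharZero K] (a : K) (N : ℕ) :
    (1 + C a⁻¹ * (exp K - 1)) ^ N = egf fun l =>
      ∑ m ∈ range (min N l + 1), (N.choose m : K) / a ^ m * (mFactStirling l m : K) := by
  ext l
  have hvanish : ∀ m ∈ range (N + 1), m ∉ range (min N l + 1) →
      (N.choose m : K) / a ^ m * (mFactStirling l m : K) = 0 := fun m hmN hm => by
    rw [mem_range] at hmN hm
    rw [mFactStirling_eq_zero_of_lt (by omega), cast_zero, mul_zero]
  rw [coeff_egf, sum_subset (range_subset_range.mpr (succ_le_succ (min_le_left N l))) hvanish,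
    add_comm, add_pow, map_sum, sum_mul]
  refine sum_congr rfl fun m _ => ?_
  rw [one_pow, mul_one, mul_pow, ← map_pow, ← map_natCast (C (R := K)), coeff_mul_C, coeff_C_mul,
    exp_sub_one_pow, coeff_egf]
  ring

end PowerSeries

open PowerSeries

/-- `(r!/(1-λ)ʳ) S_λ(n,r) = ∑_{l=0}^{n} [C(n,l) ∑_{m=0}^{min(2r,l)} C(2r,m)/(1-λ)ᵐ · m!S(l,m)] H_{n-l}⁽ʳ⁾(λ)`,
where `S_λ(n,r) = (1/r!) ∑_{j=0}^{r} C(r,j)(-λ)^{r-j} jⁿ` and `H k⁽ʳ⁾(λ)` are the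
order-`r` Frobenius-Euler numbers. -/
theorem lambda_stirling_frobenius_euler (lam : ℂ) (hlam : lam ≠ 1)
    (H : ℕ → ℕ → ℂ)
    (hH : ∀ r : ℕ,
      (PowerSeries.mk fun n => H r n * ((n.factorial : ℂ))⁻¹) *
        (PowerSeries.exp ℂ - PowerSeries.C (R := ℂ) lam) ^ r =
      PowerSeries.C (R := ℂ) ((1 - lam) ^ r))
    (n r : ℕ) :
    ((r.factorial : ℂ) / (1 - lam) ^ r) *
        (((r.factorial : ℂ))⁻¹ *
          ∑ j ∈ range (r + 1), (r.choose j : ℂ) * (-lam) ^ (r - j) * (j : ℂ) ^ n) =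
      ∑ l ∈ range (n + 1),
        ((n.choose l : ℂ) * ∑ m ∈ range (min (2 * r) l + 1),
          ((2 * r).choose m : ℂ) / (1 - lam) ^ m * (mFactStirling l m : ℂ)) *
          H r (n - l) := by
  set u := 1 - lam with hu_def
  have hu : u ≠ 0 := sub_ne_zero.mpr hlam.symm
  have hshift : C u⁻¹ * (exp ℂ - C lam) = 1 + C u⁻¹ * (exp ℂ - 1) := by
    rw [show exp ℂ - C lam = (exp ℂ - 1) + C u by rw [hu_def, map_sub, map_one]; ring,
      mul_add, ← map_mul, inv_mul_cancel₀ hu, map_one, add_comm]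
  have key : C (u ^ r)⁻¹ * (exp ℂ - C lam) ^ r = (C u⁻¹ * (exp ℂ - C lam)) ^ (2 * r) * egf (H r) :=
    calc C (u ^ r)⁻¹ * (exp ℂ - C lam) ^ r = C (u⁻¹ ^ (2 * r) * u ^ r) * (exp ℂ - C lam) ^ r := by
          rw [inv_pow, two_mul, pow_add]; field_simp
      _ = C u⁻¹ ^ (2 * r) * (exp ℂ - C lam) ^ r * (egf (H r) * (exp ℂ - C lam) ^ r) := by
          rw [egf, hH r, map_mul, map_pow]; ring
      _ = (C u⁻¹ * (exp ℂ - C lam)) ^ (2 * r) * egf (H r) := by rw [mul_pow]; ring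
  rw [hshift, exp_sub_C_pow, one_add_C_inv_mul_exp_sub_one_pow, C_mul_egf, egf_mul] at key
  have hr : (r ! : ℂ) ≠ 0 := cast_ne_zero.mpr r.factorial_ne_zero
  rw [← congrFun (egf_injective key) n]
  field_simp
end
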